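/- For every s ≥ 0 and all g, h in the spectral Barron space B^s on ℝ^d, the product gh lies in B^s and satisfies ‖gh‖_{B^s} ≤ ‖g‖_{B^s} ‖h‖_{B^s}; in particular B^s is a Banach algebra under pointwise multiplication. -/

import Mathlib

open MeasureTheory Filter Finset

noncomputable section

/-- Euclidean space `ℝ^d`. -/
abbrev Ed (d : ℕ) := EuclideanSpace ℝ (Fin d)

/-- Dot product on `ℝ^d`. -/
def dotp {d : ℕ} (x y : Ed d) : ℝ := ∑ i, x i * y i

/-- The Fourier transform with the paper's normalization:
`ĝ(ξ) = (2π)^{-d} ∫ g(x) e^{-i x·ξ} dx`. -/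
def paperFT {d : ℕ} (g : Ed d → ℝ) (ξ : Ed d) : ℂ :=
  ((2 * Real.pi) ^ d : ℝ)⁻¹ •
    ∫ x : Ed d, (g x : ℂ) * Complex.exp (-(Complex.I * (dotp x ξ : ℂ)))

/-- The spectral Barron norm `‖g‖_{B^s} = 2^{s/2} ∫ |ĝ(ξ)| (1+‖ξ‖²)^{s/2} dξ`. -/
def barronNorm {d : ℕ} (s : ℝ) (g : Ed d → ℝ) : ℝ :=
  (2 : ℝ) ^ (s / 2) * ∫ ξ : Ed d, ‖paperFT g ξ‖ * (1 + ‖ξ‖ ^ 2) ^ (s / 2)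

/-- Membership in the spectral Barron space `B^s`: the Fourier transform is in `L¹`, the
weighted Fourier transform is in `L¹` (so `‖g‖_{B^s} < ∞`), and `g` is recovered from its
Fourier transform by Fourier inversion. -/
def memBarron {d : ℕ} (s : ℝ) (g : Ed d → ℝ) : Prop :=
  Integrable (paperFT g) ∧
  Integrable (fun ξ : Ed d => ‖paperFT g ξ‖ * (1 + ‖ξ‖ ^ 2) ^ (s / 2)) ∧
  ∀ x, (g x : ℂ) = ∫ ξ : Ed d, paperFT g ξ * Complex.exp (Complex.I * (dotp x ξ : ℂ))

/-- Partial derivative `∂_i f`. -/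
def pder {d : ℕ} (i : Fin d) (f : Ed d → ℝ) (x : Ed d) : ℝ :=
  fderiv ℝ f x (EuclideanSpace.single i 1)

/-- Iterated partial derivative `∂_i^n f`. -/
def pderN {d : ℕ} (i : Fin d) : ℕ → (Ed d → ℝ) → Ed d → ℝ
  | 0, f => f
  | n + 1, f => pder i (pderN i n f)

/-- Multi-index partial derivative `∂^α f = ∂_1^{α 1} ⋯ ∂_d^{α d} f`. -/
def mder {d : ℕ} (α : Fin d → ℕ) (f : Ed d → ℝ) : Ed d → ℝ :=
  (List.finRange d).foldr (fun i g => pderN i (α i) g) f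

/-- Divergence-form second order term `∇·(A(x)∇u)(x) = Σ_i ∂_i (Σ_j A_{ij}(·) ∂_j u)(x)`. -/
def divAgrad {d : ℕ} (A : Fin d → Fin d → Ed d → ℝ) (u : Ed d → ℝ) (x : Ed d) : ℝ :=
  ∑ i, pder i (fun y => ∑ j, A i j y * pder j u y) x

/-- Constant-coefficient second order term `∇·(M∇u)(x) = Σ_{i,j} M_{ij} ∂_i ∂_j u (x)`. -/
def divMgrad {d : ℕ} (M : Matrix (Fin d) (Fin d) ℝ) (u : Ed d → ℝ) (x : Ed d) : ℝ :=
  ∑ i, ∑ j, M i j * pder i (pder j u) x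

/-- The operator `(α + β·∇ − ∇·(A(x)∇)) u` at a point `x`. -/
def ellOp {d : ℕ} (a : ℝ) (β : Fin d → ℝ) (A : Fin d → Fin d → Ed d → ℝ)
    (u : Ed d → ℝ) (x : Ed d) : ℝ :=
  a * u x + (∑ i, β i * pder i u x) - divAgrad A u x

/-- The full elliptic operator `L u = −∇·(A(x)∇u) + b(x)·∇u + c(x) u` at a point `x`. -/
def pdeOp {d : ℕ} (A : Fin d → Fin d → Ed d → ℝ) (b : Fin d → Ed d → ℝ)
    (c : Ed d → ℝ) (u : Ed d → ℝ) (x : Ed d) : ℝ :=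
  -divAgrad A u x + (∑ i, b i x * pder i u x) + c x * u x

/-- The Sobolev `H^k(Ω)` norm, `‖f‖_{H^k(Ω)} = (Σ_{|α| ≤ k} ∫_Ω |∂^α f|²)^{1/2}`. -/
def sobNorm {d : ℕ} (k : ℕ) (Ω : Set (Ed d)) (f : Ed d → ℝ) : ℝ :=
  Real.sqrt (∑ α ∈ Finset.univ.filter (fun α : Fin d → Fin (k + 1) => (∑ i, (α i : ℕ)) ≤ k),
    ∫ x in Ω, (mder (fun i => (α i : ℕ)) f x) ^ 2)

end

noncomputable section Aux
open Complex MeasureTheory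
variable {d : ℕ}

lemma dotp_comm (x y : Ed d) : dotp x y = dotp y x := by simp [dotp, mul_comm]
lemma dotp_sub (x ξ ζ : Ed d) : dotp x (ξ - ζ) = dotp x ξ - dotp x ζ := by
  simp [dotp, mul_sub, Finset.sum_sub_distrib]
lemma continuous_dotp2 : Continuous fun p : Ed d × Ed d => dotp p.1 p.2 := by
  unfold dotp
  exact continuous_finset_sum _ fun i _ =>
    ((EuclideanSpace.proj (𝕜 := ℝ) i).continuous.comp continuous_fst).mul
      ((EuclideanSpace.proj (𝕜 := ℝ) i).continuous.comp continuous_snd)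
lemma continuous_dotp_left (ξ : Ed d) : Continuous fun x : Ed d => dotp x ξ :=
  continuous_dotp2.comp (Continuous.prodMk_left ξ)
lemma continuous_dotp_right (x : Ed d) : Continuous fun ξ : Ed d => dotp x ξ :=
  continuous_dotp2.comp (Continuous.prodMk_right x)
lemma norm_exp_unit (c : ℂ) (hc : c.re = 0) (r : ℝ) : ‖Complex.exp (c * r)‖ = 1 := by
  rw [Complex.norm_exp]; simp [Complex.mul_re, hc]

/-- Continuity of a Fourier-type parametrized integral. -/
lemma cont_param_int (f : Ed d → ℂ) (hf : Integrable f) (φ : Ed d → Ed d → ℝ)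
    (hφr : ∀ x, Continuous (φ x)) (hφl : ∀ ξ, Continuous fun x => φ x ξ) (c : ℂ)
    (hc : c.re = 0) :
    Continuous fun ξ : Ed d => ∫ x : Ed d, f x * Complex.exp (c * (φ x ξ : ℂ)) := by
  apply continuous_of_dominated (bound := fun x => ‖f x‖)
  · intro ξ
    exact hf.aestronglyMeasurable.mul
      ((Complex.continuous_exp.comp
        (continuous_const.mul (Complex.continuous_ofReal.comp (hφl ξ)))).aestronglyMeasurable)
  · intro ξ
    filter_upwards with x
    rw [norm_mul, norm_exp_unit c hc, mul_one]
  · exact hf.norm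
  · filter_upwards with x
    exact continuous_const.mul
      (Complex.continuous_exp.comp (continuous_const.mul (Complex.continuous_ofReal.comp (hφr x))))

lemma barron_cont {s : ℝ} {g : Ed d → ℝ} (hg : memBarron s g) : Continuous g := by
  have hc : Continuous fun y : Ed d => ∫ ξ : Ed d, paperFT g ξ * Complex.exp (Complex.I * (dotp y ξ : ℂ)) :=
    cont_param_int (paperFT g) hg.1 (fun ξ y => dotp y ξ)
      (fun ξ => continuous_dotp_left ξ) (fun y => continuous_dotp_right y) Complex.I (by simp)
  have hgeq : g = fun y => (∫ ξ : Ed d, paperFT g ξ * Complex.exp (Complex.I * (dotp y ξ : ℂ))).re := by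
    funext y
    rw [← hg.2.2 y, Complex.ofReal_re]
  rw [hgeq]
  exact Complex.continuous_re.comp hc

lemma barron_integrable {s : ℝ} {g : Ed d → ℝ} (hg : memBarron s g) : Integrable g := by
  by_cases H : Integrable g
  · exact H
  · have hFT0 : ∀ ξ, paperFT g ξ = 0 := by
      intro ξ
      unfold paperFT
      rw [integral_undef, smul_zero]
      intro hint
      apply H
      have h2 : Integrable (fun x : Ed d => ‖g x‖) := by
        refine hint.norm.congr (Eventually.of_forall fun x => ?_)
        show ‖(g x : ℂ) * Complex.exp (-(Complex.I * (dotp x ξ : ℂ)))‖ = ‖g x‖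
        rw [norm_mul, ← neg_mul, norm_exp_unit (-Complex.I) (by simp) _, mul_one,
          Complex.norm_real]
      exact (integrable_norm_iff (barron_cont hg).aestronglyMeasurable).mp h2
    have hg0 : g = fun _ => (0 : ℝ) := by
      funext x
      have := hg.2.2 x
      simp only [hFT0, zero_mul, integral_zero] at this
      exact_mod_cast this
    rw [hg0]
    exact integrable_zero _ _ _

lemma barron_bound {s : ℝ} {g : Ed d → ℝ} (hg : memBarron s g) (x : Ed d) :
    ‖g x‖ ≤ ∫ ξ : Ed d, ‖paperFT g ξ‖ := by
  rw [← Complex.norm_real, hg.2.2 x]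
  refine (norm_integral_le_integral_norm _).trans_eq ?_
  refine integral_congr_ae (Eventually.of_forall fun ξ => ?_)
  show ‖paperFT g ξ * Complex.exp (Complex.I * (dotp x ξ : ℂ))‖ = ‖paperFT g ξ‖
  rw [norm_mul, norm_exp_unit Complex.I (by simp) _, mul_one]

lemma barron_ft_cont {g : Ed d → ℝ} (hgi : Integrable g) : Continuous (paperFT g) := by
  unfold paperFT
  refine Continuous.const_smul (g := fun ξ : Ed d => ∫ x : Ed d, (g x : ℂ) * Complex.exp (-(Complex.I * (dotp x ξ : ℂ)))) ?_ (((2 * Real.pi) ^ d : ℝ)⁻¹)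
  have := cont_param_int (fun x => (g x : ℂ)) hgi.ofReal dotp
    (fun x => continuous_dotp_right x) (fun ξ => continuous_dotp_left ξ) (-Complex.I) (by simp)
  simpa only [neg_mul] using this


lemma exp_combine (a b : ℝ) :
    Complex.exp (Complex.I * (b : ℂ)) * Complex.exp (-(Complex.I * (a : ℂ)))
      = Complex.exp (-(Complex.I * ((a - b : ℝ) : ℂ))) := by
  rw [← Complex.exp_add]
  congr 1
  push_cast
  ring

lemma paperFT_mul {s t : ℝ} {g h : Ed d → ℝ} (hg : memBarron s g) (hh : memBarron t h)
    (hgi : Integrable g) (hhi : Integrable h) (ξ : Ed d) :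
    paperFT (fun x => g x * h x) ξ = ∫ ζ : Ed d, paperFT h ζ * paperFT g (ξ - ζ) := by
  have hGc : Continuous (paperFT h) := barron_ft_cont hhi
  have hgc : Continuous g := barron_cont hg
  have hΦi : Integrable (fun p : Ed d × Ed d =>
      (g p.1 : ℂ) * paperFT h p.2 * Complex.exp (-(Complex.I * (dotp p.1 (ξ - p.2) : ℂ))))
      (volume.prod volume) := by
    have hb : Integrable (fun p : Ed d × Ed d => ‖g p.1‖ * ‖paperFT h p.2‖)
        (volume.prod volume) := hgi.norm.mul_prod hh.1.norm
    refine Integrable.mono' hb ?_ (Eventually.of_forall fun p => ?_)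
    · refine Continuous.aestronglyMeasurable ?_
      refine ((Complex.continuous_ofReal.comp (hgc.comp continuous_fst)).mul
        (hGc.comp continuous_snd)).mul ?_
      refine Complex.continuous_exp.comp (Continuous.neg ?_)
      exact continuous_const.mul (Complex.continuous_ofReal.comp
        (continuous_dotp2.comp (continuous_fst.prodMk (continuous_const.sub continuous_snd))))
    · rw [norm_mul, norm_mul, ← neg_mul, norm_exp_unit (-Complex.I) (by simp) _, mul_one,
        Complex.norm_real]
  have key : ∀ x : Ed d, ((g x : ℂ) * (h x : ℂ)) * Complex.exp (-(Complex.I * (dotp x ξ : ℂ)))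
      = ∫ ζ : Ed d, (g x : ℂ) * paperFT h ζ * Complex.exp (-(Complex.I * (dotp x (ξ - ζ) : ℂ))) := by
    intro x
    rw [hh.2.2 x, ← integral_const_mul, ← integral_mul_const]
    refine integral_congr_ae (Eventually.of_forall fun ζ => ?_)
    show (g x : ℂ) * (paperFT h ζ * Complex.exp (Complex.I * (dotp x ζ : ℂ)))
          * Complex.exp (-(Complex.I * (dotp x ξ : ℂ)))
        = (g x : ℂ) * paperFT h ζ * Complex.exp (-(Complex.I * (dotp x (ξ - ζ) : ℂ)))
    calc (g x : ℂ) * (paperFT h ζ * Complex.exp (Complex.I * (dotp x ζ : ℂ)))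
          * Complex.exp (-(Complex.I * (dotp x ξ : ℂ)))
        = (g x : ℂ) * paperFT h ζ *
            (Complex.exp (Complex.I * (dotp x ζ : ℂ)) *
              Complex.exp (-(Complex.I * (dotp x ξ : ℂ)))) := by ring
      _ = (g x : ℂ) * paperFT h ζ
            * Complex.exp (-(Complex.I * ((dotp x ξ - dotp x ζ : ℝ) : ℂ))) := by
          rw [exp_combine]
      _ = (g x : ℂ) * paperFT h ζ * Complex.exp (-(Complex.I * (dotp x (ξ - ζ) : ℂ))) := by
          rw [dotp_sub]
  calc paperFT (fun x => g x * h x) ξ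
      = ((2 * Real.pi) ^ d : ℝ)⁻¹ •
          ∫ x : Ed d, ∫ ζ : Ed d,
            (g x : ℂ) * paperFT h ζ * Complex.exp (-(Complex.I * (dotp x (ξ - ζ) : ℂ))) := by
        unfold paperFT
        congr 1
        refine integral_congr_ae (Eventually.of_forall fun x => ?_)
        show ((g x * h x : ℝ) : ℂ) * Complex.exp (-(Complex.I * (dotp x ξ : ℂ))) = _
        rw [Complex.ofReal_mul]
        exact key x
    _ = ((2 * Real.pi) ^ d : ℝ)⁻¹ •
          ∫ ζ : Ed d, ∫ x : Ed d,
            (g x : ℂ) * paperFT h ζ * Complex.exp (-(Complex.I * (dotp x (ξ - ζ) : ℂ))) := by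
        rw [integral_integral_swap (by apply hΦi)]
    _ = ∫ ζ : Ed d, paperFT h ζ * paperFT g (ξ - ζ) := by
        rw [← integral_smul]
        refine integral_congr_ae (Eventually.of_forall fun ζ => ?_)
        show ((2 * Real.pi) ^ d : ℝ)⁻¹ •
            ∫ x : Ed d, (g x : ℂ) * paperFT h ζ * Complex.exp (-(Complex.I * (dotp x (ξ - ζ) : ℂ)))
            = paperFT h ζ * paperFT g (ξ - ζ)
        have : ∫ x : Ed d, (g x : ℂ) * paperFT h ζ * Complex.exp (-(Complex.I * (dotp x (ξ - ζ) : ℂ)))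
            = paperFT h ζ * ∫ x : Ed d, (g x : ℂ) * Complex.exp (-(Complex.I * (dotp x (ξ - ζ) : ℂ))) := by
          rw [← integral_const_mul]
          exact integral_congr_ae (Eventually.of_forall fun x => by ring)
        rw [this, ← mul_smul_comm]
        rfl


lemma inv_mul {s t : ℝ} {g h : Ed d → ℝ} (hg : memBarron s g) (hh : memBarron t h)
    (hgi : Integrable g) (hhi : Integrable h) (x : Ed d) :
    ((g x * h x : ℝ) : ℂ)
      = ∫ ξ : Ed d, (∫ ζ : Ed d, paperFT h ζ * paperFT g (ξ - ζ))
          * Complex.exp (Complex.I * (dotp x ξ : ℂ)) := by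
  have hFc : Continuous (paperFT g) := barron_ft_cont hgi
  have hGc : Continuous (paperFT h) := barron_ft_cont hhi
  have hbase := hh.1.convolution_integrand (ContinuousLinearMap.mul ℂ ℂ) hg.1
  simp only [ContinuousLinearMap.mul_apply'] at hbase
  have hΨi : Integrable (fun p : Ed d × Ed d =>
      paperFT h p.2 * paperFT g (p.1 - p.2) * Complex.exp (Complex.I * (dotp x p.1 : ℂ)))
      (volume.prod volume) := by
    refine Integrable.mono' hbase.norm ?_ (Eventually.of_forall fun p => ?_)
    · refine Continuous.aestronglyMeasurable ?_
      refine ((hGc.comp continuous_snd).mul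
        (hFc.comp (continuous_fst.sub continuous_snd))).mul ?_
      exact Complex.continuous_exp.comp (continuous_const.mul
        (Complex.continuous_ofReal.comp (continuous_dotp2.comp
          (continuous_const.prodMk continuous_fst))))
    · rw [norm_mul, norm_exp_unit Complex.I (by simp) _, mul_one]
  have hsplit : ∀ ξ ζ : Ed d, Complex.exp (Complex.I * (dotp x ξ : ℂ))
      = Complex.exp (Complex.I * (dotp x (ξ - ζ) : ℂ))
        * Complex.exp (Complex.I * (dotp x ζ : ℂ)) := by
    intro ξ ζ
    rw [← Complex.exp_add]
    congr 1
    rw [dotp_sub]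
    push_cast
    ring
  calc ((g x * h x : ℝ) : ℂ)
      = (h x : ℂ) * (g x : ℂ) := by push_cast; ring
    _ = ∫ ζ : Ed d, paperFT h ζ * Complex.exp (Complex.I * (dotp x ζ : ℂ)) * (g x : ℂ) := by
        rw [integral_mul_const, ← hh.2.2 x]
    _ = ∫ ζ : Ed d, ∫ ξ : Ed d, paperFT h ζ * paperFT g (ξ - ζ)
          * Complex.exp (Complex.I * (dotp x ξ : ℂ)) := by
        refine integral_congr_ae (Eventually.of_forall fun ζ => ?_)
        show paperFT h ζ * Complex.exp (Complex.I * (dotp x ζ : ℂ)) * (g x : ℂ)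
          = ∫ ξ : Ed d, paperFT h ζ * paperFT g (ξ - ζ) * Complex.exp (Complex.I * (dotp x ξ : ℂ))
        have step : ∀ ξ : Ed d, paperFT h ζ * paperFT g (ξ - ζ)
            * Complex.exp (Complex.I * (dotp x ξ : ℂ))
            = (paperFT h ζ * Complex.exp (Complex.I * (dotp x ζ : ℂ)))
              * (paperFT g (ξ - ζ) * Complex.exp (Complex.I * (dotp x (ξ - ζ) : ℂ))) := by
          intro ξ
          rw [hsplit ξ ζ]
          ring
        rw [integral_congr_ae (Eventually.of_forall step), integral_const_mul]
        have : ∫ ξ : Ed d, paperFT g (ξ - ζ) * Complex.exp (Complex.I * (dotp x (ξ - ζ) : ℂ))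
            = ∫ η : Ed d, paperFT g η * Complex.exp (Complex.I * (dotp x η : ℂ)) :=
          integral_sub_right_eq_self
            (fun η => paperFT g η * Complex.exp (Complex.I * (dotp x η : ℂ))) ζ
        rw [this, ← hg.2.2 x]
    _ = ∫ ξ : Ed d, ∫ ζ : Ed d, paperFT h ζ * paperFT g (ξ - ζ)
          * Complex.exp (Complex.I * (dotp x ξ : ℂ)) := by
        exact integral_integral_swap (by apply hΨi.swap)
    _ = ∫ ξ : Ed d, (∫ ζ : Ed d, paperFT h ζ * paperFT g (ξ - ζ))
          * Complex.exp (Complex.I * (dotp x ξ : ℂ)) := by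
        refine integral_congr_ae (Eventually.of_forall fun ξ => ?_)
        show (∫ ζ : Ed d, paperFT h ζ * paperFT g (ξ - ζ)
            * Complex.exp (Complex.I * (dotp x ξ : ℂ)))
          = (∫ ζ : Ed d, paperFT h ζ * paperFT g (ξ - ζ))
            * Complex.exp (Complex.I * (dotp x ξ : ℂ))
        rw [integral_mul_const]

lemma peetre {s : ℝ} (hs : 0 ≤ s) (ξ ζ : Ed d) :
    (1 + ‖ξ‖ ^ 2) ^ (s / 2)
      ≤ (2 : ℝ) ^ (s / 2) * ((1 + ‖ξ - ζ‖ ^ 2) ^ (s / 2) * (1 + ‖ζ‖ ^ 2) ^ (s / 2)) := by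
  have hs2 : 0 ≤ s / 2 := by linarith
  have h1 : ‖ξ‖ ≤ ‖ξ - ζ‖ + ‖ζ‖ := by
    simpa using norm_add_le (ξ - ζ) ζ
  have h2 : ‖ξ‖ ^ 2 ≤ (‖ξ - ζ‖ + ‖ζ‖) ^ 2 := by
    exact pow_le_pow_left₀ (norm_nonneg _) h1 2
  have base : (1 : ℝ) + ‖ξ‖ ^ 2 ≤ 2 * ((1 + ‖ξ - ζ‖ ^ 2) * (1 + ‖ζ‖ ^ 2)) := by
    nlinarith [sq_nonneg (‖ξ - ζ‖ - ‖ζ‖), sq_nonneg (‖ξ - ζ‖ * ‖ζ‖), norm_nonneg (ξ - ζ),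
      norm_nonneg ζ]
  calc (1 + ‖ξ‖ ^ 2) ^ (s / 2)
      ≤ (2 * ((1 + ‖ξ - ζ‖ ^ 2) * (1 + ‖ζ‖ ^ 2))) ^ (s / 2) :=
        Real.rpow_le_rpow (by positivity) base hs2
    _ = (2 : ℝ) ^ (s / 2) * ((1 + ‖ξ - ζ‖ ^ 2) ^ (s / 2) * (1 + ‖ζ‖ ^ 2) ^ (s / 2)) := by
        rw [Real.mul_rpow (by norm_num) (by positivity),
          Real.mul_rpow (by positivity) (by positivity)]

lemma one_le_weight (s : ℝ) (hs : 0 ≤ s) (ξ : Ed d) : (1 : ℝ) ≤ (1 + ‖ξ‖ ^ 2) ^ (s / 2) := by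
  exact Real.one_le_rpow (by nlinarith [sq_nonneg ‖ξ‖]) (by linarith)

end Aux

/-- `B^s` is a Banach algebra under pointwise multiplication:
`gh ∈ B^s` and `‖gh‖_{B^s} ≤ ‖g‖_{B^s} ‖h‖_{B^s}`. -/
theorem barron_mul {d : ℕ} (s : ℝ) (hs : 0 ≤ s) (g h : Ed d → ℝ)
    (hg : memBarron s g) (hh : memBarron s h) :
    memBarron s (fun x => g x * h x) ∧
      barronNorm s (fun x => g x * h x) ≤ barronNorm s g * barronNorm s h := by
  have hgi : Integrable g := barron_integrable hg
  have hhi : Integrable h := barron_integrable hh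
  have hFc : Continuous (paperFT g) := barron_ft_cont hgi
  have hGc : Continuous (paperFT h) := barron_ft_cont hhi
  have hgc : Continuous g := barron_cont hg
  have hghid : ∀ ξ : Ed d, paperFT (fun x => g x * h x) ξ
      = ∫ ζ : Ed d, paperFT h ζ * paperFT g (ξ - ζ) := paperFT_mul hg hh hgi hhi
  have hconvInt : Integrable (fun ξ : Ed d => ∫ ζ : Ed d, paperFT h ζ * paperFT g (ξ - ζ)) := by
    have := hh.1.integrable_convolution (ContinuousLinearMap.mul ℂ ℂ) hg.1
    exact this
  have hFTgh_int : Integrable (paperFT fun x => g x * h x) :=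
    hconvInt.congr (Eventually.of_forall fun ξ => (hghid ξ).symm)
  have hu_int : Integrable (fun ζ : Ed d => ‖paperFT h ζ‖ * (1 + ‖ζ‖ ^ 2) ^ (s / 2)) := hh.2.1
  have hv_int : Integrable (fun ζ : Ed d => ‖paperFT g ζ‖ * (1 + ‖ζ‖ ^ 2) ^ (s / 2)) := hg.2.1
  have huv : Integrable (fun ξ : Ed d => ∫ ζ : Ed d,
      (‖paperFT h ζ‖ * (1 + ‖ζ‖ ^ 2) ^ (s / 2))
        * (‖paperFT g (ξ - ζ)‖ * (1 + ‖ξ - ζ‖ ^ 2) ^ (s / 2))) := by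
    have := hu_int.integrable_convolution (ContinuousLinearMap.mul ℝ ℝ) hv_int
    exact this
  have hae : ∀ᵐ ξ : Ed d, Integrable (fun ζ : Ed d =>
      (‖paperFT h ζ‖ * (1 + ‖ζ‖ ^ 2) ^ (s / 2))
        * (‖paperFT g (ξ - ζ)‖ * (1 + ‖ξ - ζ‖ ^ 2) ^ (s / 2))) := by
    have := hu_int.ae_convolution_exists (ContinuousLinearMap.mul ℝ ℝ) hv_int
    filter_upwards [this] with ξ hξ
    simpa [MeasureTheory.ConvolutionExistsAt, ContinuousLinearMap.mul_apply'] using hξ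
  have wcont : Continuous fun ξ : Ed d => (1 + ‖ξ‖ ^ 2) ^ (s / 2) := by
    have hc : Continuous fun ξ : Ed d => (1 : ℝ) + ‖ξ‖ ^ 2 := continuous_const.add (continuous_norm.pow 2)
    exact hc.rpow_const fun ξ => Or.inr (by linarith)
  have hghInt : Integrable (fun x => g x * h x) :=
    hhi.bdd_mul hgc.aestronglyMeasurable
      (c := ∫ ξ : Ed d, ‖paperFT g ξ‖) (Eventually.of_forall fun x => barron_bound hg x)
  have hFTghc : Continuous (paperFT fun x => g x * h x) := barron_ft_cont hghInt
  -- key a.e. pointwise bound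
  have key : ∀ᵐ ξ : Ed d, ‖paperFT (fun x => g x * h x) ξ‖ * (1 + ‖ξ‖ ^ 2) ^ (s / 2)
      ≤ (2 : ℝ) ^ (s / 2) * ∫ ζ : Ed d,
          (‖paperFT h ζ‖ * (1 + ‖ζ‖ ^ 2) ^ (s / 2))
            * (‖paperFT g (ξ - ζ)‖ * (1 + ‖ξ - ζ‖ ^ 2) ^ (s / 2)) := by
    filter_upwards [hae] with ξ hξ
    have hw0 : (0 : ℝ) ≤ (1 + ‖ξ‖ ^ 2) ^ (s / 2) := by positivity
    have h1 : ‖paperFT (fun x => g x * h x) ξ‖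
        ≤ ∫ ζ : Ed d, ‖paperFT h ζ‖ * ‖paperFT g (ξ - ζ)‖ := by
      rw [hghid ξ]
      refine (norm_integral_le_integral_norm _).trans_eq ?_
      exact integral_congr_ae (Eventually.of_forall fun ζ => norm_mul _ _)
    have ptwise : ∀ ζ : Ed d, ‖paperFT h ζ‖ * ‖paperFT g (ξ - ζ)‖ * (1 + ‖ξ‖ ^ 2) ^ (s / 2)
        ≤ (2 : ℝ) ^ (s / 2) * ((‖paperFT h ζ‖ * (1 + ‖ζ‖ ^ 2) ^ (s / 2))
            * (‖paperFT g (ξ - ζ)‖ * (1 + ‖ξ - ζ‖ ^ 2) ^ (s / 2))) := by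
      intro ζ
      have hp := peetre hs ξ ζ
      have hnn : (0 : ℝ) ≤ ‖paperFT h ζ‖ * ‖paperFT g (ξ - ζ)‖ := by positivity
      calc ‖paperFT h ζ‖ * ‖paperFT g (ξ - ζ)‖ * (1 + ‖ξ‖ ^ 2) ^ (s / 2)
          ≤ ‖paperFT h ζ‖ * ‖paperFT g (ξ - ζ)‖
              * ((2 : ℝ) ^ (s / 2) * ((1 + ‖ξ - ζ‖ ^ 2) ^ (s / 2)
                  * (1 + ‖ζ‖ ^ 2) ^ (s / 2))) := by
            rw [mul_comm (‖paperFT h ζ‖ * ‖paperFT g (ξ - ζ)‖) ((1 + ‖ξ‖ ^ 2) ^ (s / 2)),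
              mul_comm (‖paperFT h ζ‖ * ‖paperFT g (ξ - ζ)‖)]
            exact mul_le_mul_of_nonneg_right hp hnn
        _ = (2 : ℝ) ^ (s / 2) * ((‖paperFT h ζ‖ * (1 + ‖ζ‖ ^ 2) ^ (s / 2))
              * (‖paperFT g (ξ - ζ)‖ * (1 + ‖ξ - ζ‖ ^ 2) ^ (s / 2))) := by ring
    have hlint : Integrable (fun ζ : Ed d =>
        ‖paperFT h ζ‖ * ‖paperFT g (ξ - ζ)‖ * (1 + ‖ξ‖ ^ 2) ^ (s / 2)) := by
      refine Integrable.mono' (hξ.const_mul ((2 : ℝ) ^ (s / 2))) ?_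
        (Eventually.of_forall fun ζ => ?_)
      · exact (((hGc.norm.mul ((hFc.norm.comp (continuous_const.sub continuous_id)))).mul
          continuous_const)).aestronglyMeasurable
      · rw [Real.norm_of_nonneg (by positivity)]
        exact ptwise ζ
    calc ‖paperFT (fun x => g x * h x) ξ‖ * (1 + ‖ξ‖ ^ 2) ^ (s / 2)
        ≤ (∫ ζ : Ed d, ‖paperFT h ζ‖ * ‖paperFT g (ξ - ζ)‖) * (1 + ‖ξ‖ ^ 2) ^ (s / 2) :=
          mul_le_mul_of_nonneg_right h1 hw0
      _ = ∫ ζ : Ed d, ‖paperFT h ζ‖ * ‖paperFT g (ξ - ζ)‖ * (1 + ‖ξ‖ ^ 2) ^ (s / 2) := by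
          rw [integral_mul_const]
      _ ≤ ∫ ζ : Ed d, (2 : ℝ) ^ (s / 2) * ((‖paperFT h ζ‖ * (1 + ‖ζ‖ ^ 2) ^ (s / 2))
            * (‖paperFT g (ξ - ζ)‖ * (1 + ‖ξ - ζ‖ ^ 2) ^ (s / 2))) :=
          integral_mono hlint (hξ.const_mul _) ptwise
      _ = (2 : ℝ) ^ (s / 2) * ∫ ζ : Ed d, (‖paperFT h ζ‖ * (1 + ‖ζ‖ ^ 2) ^ (s / 2))
            * (‖paperFT g (ξ - ζ)‖ * (1 + ‖ξ - ζ‖ ^ 2) ^ (s / 2)) := by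
          rw [integral_const_mul]
  have hWint : Integrable (fun ξ : Ed d =>
      ‖paperFT (fun x => g x * h x) ξ‖ * (1 + ‖ξ‖ ^ 2) ^ (s / 2)) := by
    refine Integrable.mono' (huv.const_mul ((2 : ℝ) ^ (s / 2)))
      ((hFTghc.norm.mul wcont).aestronglyMeasurable) ?_
    filter_upwards [key] with ξ hξ
    rw [Real.norm_of_nonneg (by positivity)]
    exact hξ
  have hinv : ∀ x : Ed d, (((fun x => g x * h x) x : ℝ) : ℂ)
      = ∫ ξ : Ed d, paperFT (fun x => g x * h x) ξ
          * Complex.exp (Complex.I * (dotp x ξ : ℂ)) := by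
    intro x
    show ((g x * h x : ℝ) : ℂ) = _
    rw [inv_mul hg hh hgi hhi x]
    refine integral_congr_ae (Eventually.of_forall fun ξ => ?_)
    show (∫ ζ : Ed d, paperFT h ζ * paperFT g (ξ - ζ))
          * Complex.exp (Complex.I * (dotp x ξ : ℂ))
        = paperFT (fun x => g x * h x) ξ * Complex.exp (Complex.I * (dotp x ξ : ℂ))
    rw [hghid ξ]
  refine ⟨⟨hFTgh_int, hWint, hinv⟩, ?_⟩
  -- norm inequality
  have heq : (∫ ξ : Ed d, ∫ ζ : Ed d, (‖paperFT h ζ‖ * (1 + ‖ζ‖ ^ 2) ^ (s / 2))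
        * (‖paperFT g (ξ - ζ)‖ * (1 + ‖ξ - ζ‖ ^ 2) ^ (s / 2)))
      = (∫ ζ : Ed d, ‖paperFT h ζ‖ * (1 + ‖ζ‖ ^ 2) ^ (s / 2))
        * (∫ ζ : Ed d, ‖paperFT g ζ‖ * (1 + ‖ζ‖ ^ 2) ^ (s / 2)) := by
    have := integral_convolution (ContinuousLinearMap.mul ℝ ℝ) hu_int hv_int
    simpa [MeasureTheory.convolution, ContinuousLinearMap.mul_apply'] using this
  have hA : (∫ ξ : Ed d, ‖paperFT (fun x => g x * h x) ξ‖ * (1 + ‖ξ‖ ^ 2) ^ (s / 2))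
      ≤ (2 : ℝ) ^ (s / 2) * ((∫ ζ : Ed d, ‖paperFT h ζ‖ * (1 + ‖ζ‖ ^ 2) ^ (s / 2))
          * (∫ ζ : Ed d, ‖paperFT g ζ‖ * (1 + ‖ζ‖ ^ 2) ^ (s / 2))) := by
    have hmono := integral_mono_of_nonneg
      (Eventually.of_forall fun ξ : Ed d => by positivity)
      (huv.const_mul ((2 : ℝ) ^ (s / 2))) key
    rw [integral_const_mul, heq] at hmono
    exact hmono
  show (2 : ℝ) ^ (s / 2) * (∫ ξ : Ed d, ‖paperFT (fun x => g x * h x) ξ‖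
        * (1 + ‖ξ‖ ^ 2) ^ (s / 2))
      ≤ ((2 : ℝ) ^ (s / 2) * ∫ ξ : Ed d, ‖paperFT g ξ‖ * (1 + ‖ξ‖ ^ 2) ^ (s / 2))
        * ((2 : ℝ) ^ (s / 2) * ∫ ξ : Ed d, ‖paperFT h ξ‖ * (1 + ‖ξ‖ ^ 2) ^ (s / 2))
  calc (2 : ℝ) ^ (s / 2) * (∫ ξ : Ed d, ‖paperFT (fun x => g x * h x) ξ‖
        * (1 + ‖ξ‖ ^ 2) ^ (s / 2))
      ≤ (2 : ℝ) ^ (s / 2) * ((2 : ℝ) ^ (s / 2)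
          * ((∫ ζ : Ed d, ‖paperFT h ζ‖ * (1 + ‖ζ‖ ^ 2) ^ (s / 2))
            * (∫ ζ : Ed d, ‖paperFT g ζ‖ * (1 + ‖ζ‖ ^ 2) ^ (s / 2)))) :=
        mul_le_mul_of_nonneg_left hA (by positivity)
    _ = ((2 : ℝ) ^ (s / 2) * ∫ ξ : Ed d, ‖paperFT g ξ‖ * (1 + ‖ξ‖ ^ 2) ^ (s / 2))
        * ((2 : ℝ) ^ (s / 2) * ∫ ξ : Ed d, ‖paperFT h ξ‖ * (1 + ‖ξ‖ ^ 2) ^ (s / 2)) := by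
      ring
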